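/- (Discrete-time Mean Pontryagin Maximum Principle.) Let N ≥ 1 and T ≥ 1, let f : ℝ^m × ℝ^n → ℝ^m, c : ℝ^m × ℝ^n → ℝ, Φ : ℝ^m → ℝ be continuously differentiable, and for i = 1,…,N let trajectories satisfy s^i_{t+1} = f(s^i_t, a^i_t) from fixed initial states s^i_0. Define the mean cost J_N(a) = (1/N) Σ_{i=1}^N [ Σ_{t=0}^{T-1} c(s^i_t,a^i_t) + Φ(s^i_T) ] as a function of all the actions a = (a^i_t), and per-trajectory costates λ^i_T = ∇Φ(s^i_T), λ^i_t = ∇_{s^i_t} c(s^i_t,a^i_t) + (∇_{s^i_t} f(s^i_t,a^i_t))ᵀ λ^i_{t+1}, and Hamiltonians H^i(s^i_t,a^i_t,λ^i_{t+1}) = c(s^i_t,a^i_t) + λ^i_{t+1}ᵀ f(s^i_t,a^i_t). If a* = ((a^i_t)*) is a local minimizer of J_N, then for every i and every t, ∇_{a^i_t} H^i(s^{i*}_t, a^{i*}_t, λ^{i*}_{t+1}) = 0; equivalently, the gradient of the mean Hamiltonian with respect to each action vanishes at the optimum. -/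

import Mathlib

open scoped RealInnerProductSpace
open InnerProductSpace

noncomputable section

section helpers
variable {E F : Type*} [NormedAddCommGroup E] [InnerProductSpace ℝ E] [CompleteSpace E]
  [NormedAddCommGroup F] [InnerProductSpace ℝ F] [CompleteSpace F]

lemma myHasGradientAt_comp_fderiv {ψ : E → F} {φ : F → ℝ} {L : E →L[ℝ] F} {g : F} {x : E}
    (hψ : HasFDerivAt ψ L x) (hφ : HasGradientAt φ g (ψ x)) :
    HasGradientAt (fun u => φ (ψ u)) (ContinuousLinearMap.adjoint L g) x := by
  rw [hasGradientAt_iff_hasFDerivAt]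
  have h := (hφ.hasFDerivAt).comp x hψ
  refine h.congr_fderiv ?_
  ext v
  simp [InnerProductSpace.toDual_apply_apply, ContinuousLinearMap.adjoint_inner_left]

lemma myHasGradientAt_inner_right (w : F) (y : F) : HasGradientAt (fun z => ⟪w, z⟫) w y := by
  rw [hasGradientAt_iff_hasFDerivAt]
  have h : (fun z => ⟪w, z⟫) = ⇑(toDual ℝ F w) := funext fun z => (toDual_apply_apply).symm
  rw [h]
  exact (toDual ℝ F w).hasFDerivAt

lemma myHasGradientAt_inner_comp {ψ : E → F} {L : E →L[ℝ] F} {x : E}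
    (hψ : HasFDerivAt ψ L x) (w : F) :
    HasGradientAt (fun u => ⟪w, ψ u⟫) (ContinuousLinearMap.adjoint L w) x :=
  myHasGradientAt_comp_fderiv hψ (myHasGradientAt_inner_right w (ψ x))

lemma myHasGradientAt_add {f g : E → ℝ} {a b : E} {x : E}
    (hf : HasGradientAt f a x) (hg : HasGradientAt g b x) :
    HasGradientAt (fun u => f u + g u) (a + b) x := by
  rw [hasGradientAt_iff_hasFDerivAt] at *
  refine (hf.add hg).congr_fderiv ?_
  ext v
  simp [InnerProductSpace.toDual_apply_apply, inner_add_left]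

lemma myHasGradientAt_const_add {f : E → ℝ} {a : E} {x : E} (C : ℝ)
    (hf : HasGradientAt f a x) : HasGradientAt (fun u => C + f u) a x := by
  rw [hasGradientAt_iff_hasFDerivAt] at *
  exact hf.const_add C

lemma myHasGradientAt_const_mul_add {f : E → ℝ} {a : E} {x : E} (r C : ℝ)
    (hf : HasGradientAt f a x) : HasGradientAt (fun u => r * (f u + C)) (r • a) x := by
  rw [hasGradientAt_iff_hasFDerivAt] at *
  refine ((hf.add_const C).const_mul r).congr_fderiv ?_
  ext v
  simp [InnerProductSpace.toDual_apply_apply, real_inner_smul_left]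

end helpers

/-- `Vec m` is Euclidean space `ℝ^m`. -/
abbrev Vec (m : ℕ) : Type := EuclideanSpace ℝ (Fin m)

/-- State trajectory generated by dynamics `f` from initial state `s0` under actions `a`. -/
def traj {m n : ℕ} (f : Vec m → Vec n → Vec m) (s0 : Vec m) (a : ℕ → Vec n) : ℕ → Vec m
  | 0 => s0
  | t + 1 => f (traj f s0 a t) (a t)

/-- **Discrete-time Mean Pontryagin Maximum Principle.** For `N` deterministic
trajectories `s^i_{t+1} = f(s^i_t, a^i_t)` with mean cost
`J_N(a) = (1/N) ∑_i [∑_{t<T} c(s^i_t,a^i_t) + Φ(s^i_T)]`, per-trajectory costates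
`λ^i_T = ∇Φ(s^i_T)`, `λ^i_t = ∇ₛc + (∇ₛf)ᵀ λ^i_{t+1}` (evaluated along the optimal
trajectories), and Hamiltonians `H^i = c(s^i_t,a^i_t) + λ^i_{t+1}ᵀ f(s^i_t,a^i_t)`: if `a*` is a
local minimizer of `J_N`, then `∇_{a^i_t} H^i = 0` for every `i` and every `t < T`. -/
theorem mean_pontryagin_maximum_principle
    (m n N T : ℕ) (hN : 1 ≤ N) (hT : 1 ≤ T)
    (f : Vec m → Vec n → Vec m) (c : Vec m → Vec n → ℝ) (Φ : Vec m → ℝ)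
    (hf : ContDiff ℝ 1 (Function.uncurry f))
    (hc : ContDiff ℝ 1 (Function.uncurry c))
    (hΦ : ContDiff ℝ 1 Φ)
    (s0 : Fin N → Vec m)
    (JN : (Fin N → ℕ → Vec n) → ℝ)
    (hJN : ∀ b : Fin N → ℕ → Vec n,
      JN b = (1 / (N : ℝ)) * ∑ i : Fin N,
        ((∑ t ∈ Finset.range T, c (traj f (s0 i) (b i) t) (b i t))
          + Φ (traj f (s0 i) (b i) T)))
    (astar : Fin N → ℕ → Vec n)
    (hmin : IsLocalMin JN astar)
    (lam : Fin N → ℕ → Vec m)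
    (hlamT : ∀ i : Fin N, lam i T = gradient Φ (traj f (s0 i) (astar i) T))
    (hlam : ∀ (i : Fin N) (t : ℕ), t < T → lam i t =
      gradient (fun x => c x (astar i t)) (traj f (s0 i) (astar i) t)
        + (fderiv ℝ (fun x => f x (astar i t)) (traj f (s0 i) (astar i) t)).adjoint
            (lam i (t + 1))) :
    ∀ (i : Fin N) (t : ℕ), t < T →
      gradient (fun u =>
          c (traj f (s0 i) (astar i) t) u
            + ⟪lam i (t + 1), f (traj f (s0 i) (astar i) t) u⟫) (astar i t) = 0 := by
  classical
  intro i t ht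
  -- differentiability of partial maps
  have hfd : Differentiable ℝ (Function.uncurry f) := hf.differentiable one_ne_zero
  have hcd : Differentiable ℝ (Function.uncurry c) := hc.differentiable one_ne_zero
  have hΦd : Differentiable ℝ Φ := hΦ.differentiable one_ne_zero
  have dfx : ∀ (y : Vec m) (a : Vec n), DifferentiableAt ℝ (fun z => f z a) y := by
    intro y a
    have h := (hfd (y, a)).comp y
      ((differentiableAt_fun_id.prodMk (differentiableAt_const a)) :
        DifferentiableAt ℝ (fun z : Vec m => (z, a)) y)
    simpa [Function.comp_def, Function.uncurry] using h
  have dfa : ∀ (y : Vec m) (a : Vec n), DifferentiableAt ℝ (fun v => f y v) a := by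
    intro y a
    have h := (hfd (y, a)).comp a
      ((DifferentiableAt.prodMk (differentiableAt_const y) differentiableAt_fun_id) :
        DifferentiableAt ℝ (fun v : Vec n => (y, v)) a)
    simpa [Function.comp_def, Function.uncurry] using h
  have dcx : ∀ (y : Vec m) (a : Vec n), DifferentiableAt ℝ (fun z => c z a) y := by
    intro y a
    have h := (hcd (y, a)).comp y
      ((differentiableAt_fun_id.prodMk (differentiableAt_const a)) :
        DifferentiableAt ℝ (fun z : Vec m => (z, a)) y)
    simpa [Function.comp_def, Function.uncurry] using h
  have dca : ∀ (y : Vec m) (a : Vec n), DifferentiableAt ℝ (fun v => c y v) a := by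
    intro y a
    have h := (hcd (y, a)).comp a
      ((DifferentiableAt.prodMk (differentiableAt_const y) differentiableAt_fun_id) :
        DifferentiableAt ℝ (fun v : Vec n => (y, v)) a)
    simpa [Function.comp_def, Function.uncurry] using h
  set u0 : Vec n := astar i t with hu0
  set x : ℕ → Vec m := traj f (s0 i) (astar i) with hx
  -- modified actions
  set act : Vec n → ℕ → Vec n := fun u s => if s = t then u else astar i s with hactdef
  set σ : Vec n → ℕ → Vec m := fun u => traj f (s0 i) (act u) with hσdef
  set b : Vec n → Fin N → ℕ → Vec n := fun u j => if j = i then act u else astar j with hbdef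
  have hact0 : act u0 = astar i := by
    funext s
    by_cases h : s = t
    · simp [hactdef, h, hu0]
    · simp [hactdef, h]
  have hσ0 : ∀ s, σ u0 s = x s := by
    intro s
    rw [hσdef]
    show traj f (s0 i) (act u0) s = x s
    rw [hact0, hx]
  have hactne : ∀ u s, s ≠ t → act u s = astar i s := by
    intro u s h; simp [hactdef, h]
  have hσlow : ∀ u s, s ≤ t → σ u s = x s := by
    intro u s
    induction s with
    | zero => intro _; rw [hσdef, hx]; rfl
    | succ s ih =>
      intro hs
      have hst : s < t := Nat.lt_of_succ_le hs
      have h1 : σ u (s + 1) = f (σ u s) (act u s) := by rw [hσdef]; rfl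
      have h2 : x (s + 1) = f (x s) (astar i s) := by rw [hx]; rfl
      rw [h1, h2, ih hst.le, hactne u s hst.ne]
  have hσsucc : ∀ u s, σ u (s + 1) = f (σ u s) (act u s) := by
    intro u s; rw [hσdef]; rfl
  -- local minimum of the single-action perturbation
  have hb0 : b u0 = astar := by
    funext j
    by_cases h : j = i
    · subst h; rw [hbdef]; simp [hact0]
    · rw [hbdef]; simp [h]
  have hbne : ∀ u (j : Fin N), j ≠ i → b u j = astar j := by
    intro u j h; rw [hbdef]; simp [h]
  have hbi : ∀ u, b u i = act u := by intro u; rw [hbdef]; simp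
  have hbcont : Continuous b := by
    rw [hbdef]
    apply continuous_pi
    intro j
    by_cases h : j = i
    · subst h
      simp only [if_pos rfl]
      apply continuous_pi
      intro s
      by_cases hs : s = t
      · subst hs; simp only [hactdef]; simpa using continuous_id'
      · simp only [hactdef]; simpa [hs] using continuous_const
    · simp only [if_neg h]; exact continuous_const
  have hlocmin : IsLocalMin (fun u => JN (b u)) u0 := by
    have h1 : IsLocalMin JN (b u0) := by rw [hb0]; exact hmin
    have := h1.comp_continuous hbcont.continuousAt
    simpa [Function.comp_def] using this
  -- key backward induction on the tail of the cost
  have key : ∀ d s : ℕ, s + d = T → t + 1 ≤ s → ∀ L : Vec n →L[ℝ] Vec m,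
      HasFDerivAt (fun u => σ u s) L u0 →
      HasGradientAt (fun u => (∑ r ∈ Finset.Ico s T, c (σ u r) (act u r)) + Φ (σ u T))
        (ContinuousLinearMap.adjoint L (lam i s)) u0 := by
    intro d
    induction d with
    | zero =>
      intro s hsd hts L hL
      have hsT : s = T := by omega
      subst hsT
      simp only [Finset.Ico_self, Finset.sum_empty, zero_add]
      have hgΦ : HasGradientAt Φ (gradient Φ (σ u0 s)) (σ u0 s) := (hΦd _).hasGradientAt
      have h := myHasGradientAt_comp_fderiv hL hgΦ
      have he : gradient Φ (σ u0 s) = lam i s := by rw [hσ0 s, hlamT i, hx]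
      rwa [he] at h
    | succ d ih =>
      intro s hsd hts L hL
      have hsT : s < T := by omega
      have hneq : s ≠ t := by omega
      have hsplit : (fun u => (∑ r ∈ Finset.Ico s T, c (σ u r) (act u r)) + Φ (σ u T))
          = fun u => c (σ u s) (astar i s)
              + ((∑ r ∈ Finset.Ico (s + 1) T, c (σ u r) (act u r)) + Φ (σ u T)) := by
        funext u
        rw [Finset.sum_eq_sum_Ico_succ_bot hsT, hactne u s hneq]
        ring
      rw [hsplit]
      -- derivative of σ at time s+1
      have hσs0 : σ u0 s = x s := hσ0 s
      have hfsd : HasFDerivAt (fun y => f y (astar i s))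
          (fderiv ℝ (fun y => f y (astar i s)) (x s)) (σ u0 s) := by
        rw [hσs0]; exact (dfx _ _).hasFDerivAt
      have hσsucc' : (fun u => σ u (s + 1)) = fun u => f (σ u s) (astar i s) := by
        funext u
        rw [hσsucc u s, hactne u s hneq]
      have hL' : HasFDerivAt (fun u => σ u (s + 1))
          ((fderiv ℝ (fun y => f y (astar i s)) (x s)) ∘L L) u0 := by
        rw [hσsucc']
        have := hfsd.comp u0 hL
        simpa [Function.comp_def, hσs0] using this
      have htail := ih (s + 1) (by omega) (by omega) _ hL'
      have hcs : HasGradientAt (fun y => c y (astar i s))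
          (gradient (fun y => c y (astar i s)) (x s)) (σ u0 s) := by
        rw [hσs0]; exact (dcx _ _).hasGradientAt
      have hhead := myHasGradientAt_comp_fderiv hL hcs
      have hsum := myHasGradientAt_add hhead htail
      have heq : ContinuousLinearMap.adjoint L (gradient (fun y => c y (astar i s)) (x s))
          + ContinuousLinearMap.adjoint ((fderiv ℝ (fun y => f y (astar i s)) (x s)) ∘L L)
              (lam i (s + 1))
          = ContinuousLinearMap.adjoint L (lam i s) := by
        rw [hlam i s hsT, ContinuousLinearMap.adjoint_comp, map_add, ← hx]
        rfl
      rwa [heq] at hsum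
  -- derivative of σ at time t+1
  have hIcoT : t + 1 ≤ T := ht
  have hDfu0 : HasFDerivAt (fun u => σ u (t + 1))
      (fderiv ℝ (fun v => f (x t) v) u0) u0 := by
    have h1 : (fun u => σ u (t + 1)) = fun u => f (x t) u := by
      funext u
      rw [hσsucc u t, hσlow u t le_rfl]
      congr 1
      rw [hactdef]
      simp
    rw [h1]
    exact (dfa (x t) u0).hasFDerivAt
  have htail := key (T - (t + 1)) (t + 1) (by omega) le_rfl _ hDfu0
  have hhead : HasGradientAt (fun v => c (x t) v)
      (gradient (fun v => c (x t) v) u0) u0 := (dca _ _).hasGradientAt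
  have hFi : HasGradientAt (fun u =>
      (∑ s ∈ Finset.range t, c (x s) (astar i s))
        + (c (x t) u + ((∑ r ∈ Finset.Ico (t + 1) T, c (σ u r) (act u r)) + Φ (σ u T))))
      (gradient (fun v => c (x t) v) u0
        + ContinuousLinearMap.adjoint (fderiv ℝ (fun v => f (x t) v) u0) (lam i (t + 1))) u0 := by
    exact myHasGradientAt_const_add _ (myHasGradientAt_add hhead htail)
  -- rewrite the objective along the perturbation
  have hrep : (fun u => JN (b u)) = fun u => (1 / (N : ℝ)) *
      (((∑ s ∈ Finset.range t, c (x s) (astar i s))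
        + (c (x t) u + ((∑ r ∈ Finset.Ico (t + 1) T, c (σ u r) (act u r)) + Φ (σ u T))))
        + (∑ j ∈ Finset.univ.erase i,
            ((∑ s ∈ Finset.range T, c (traj f (s0 j) (astar j) s) (astar j s))
              + Φ (traj f (s0 j) (astar j) T)))) := by
    funext u
    rw [hJN (b u)]
    congr 1
    rw [← Finset.add_sum_erase _ _ (Finset.mem_univ i)]
    congr 1
    · rw [hbi u]
      rw [show traj f (s0 i) (act u) = σ u from by rw [hσdef]]
      rw [Finset.range_eq_Ico, ← Finset.sum_Ico_consecutive _ (Nat.zero_le (t + 1)) hIcoT]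
      rw [← Finset.range_eq_Ico, Finset.sum_range_succ]
      have e1 : (∑ s ∈ Finset.range t, c (σ u s) (act u s))
          = ∑ s ∈ Finset.range t, c (x s) (astar i s) := by
        refine Finset.sum_congr rfl fun s hs => ?_
        have hst : s < t := Finset.mem_range.mp hs
        rw [hσlow u s hst.le, hactne u s hst.ne]
      rw [e1, hσlow u t le_rfl, show act u t = u from by rw [hactdef]; simp]
      ring
    · exact Finset.sum_congr rfl fun j hj => by
        rw [hbne u j (Finset.ne_of_mem_erase hj)]
  have hJg : HasGradientAt (fun u => JN (b u))
      ((1 / (N : ℝ)) • (gradient (fun v => c (x t) v) u0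
        + ContinuousLinearMap.adjoint (fderiv ℝ (fun v => f (x t) v) u0) (lam i (t + 1)))) u0 := by
    rw [hrep]
    exact myHasGradientAt_const_mul_add _ _ hFi
  have hfz : fderiv ℝ (fun u => JN (b u)) u0 = 0 := hlocmin.fderiv_eq_zero
  have htd : InnerProductSpace.toDual ℝ (Vec n) ((1 / (N : ℝ)) • (gradient (fun v => c (x t) v) u0
      + ContinuousLinearMap.adjoint (fderiv ℝ (fun v => f (x t) v) u0) (lam i (t + 1)))) = 0 := by
    have h := hJg.hasFDerivAt.fderiv
    rw [hfz] at h
    exact h.symm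
  have hsm : (1 / (N : ℝ)) • (gradient (fun v => c (x t) v) u0
      + ContinuousLinearMap.adjoint (fderiv ℝ (fun v => f (x t) v) u0) (lam i (t + 1))) = 0 := by
    apply (InnerProductSpace.toDual ℝ (Vec n)).injective
    rw [htd, map_zero]
  have hGH0 : gradient (fun v => c (x t) v) u0
      + ContinuousLinearMap.adjoint (fderiv ℝ (fun v => f (x t) v) u0) (lam i (t + 1)) = 0 := by
    have hNne : (1 / (N : ℝ)) ≠ 0 := one_div_ne_zero (Nat.cast_ne_zero.mpr (by omega))
    rcases smul_eq_zero.mp hsm with h | h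
    · exact absurd h hNne
    · exact h
  have hH : HasGradientAt (fun u => c (x t) u + ⟪lam i (t + 1), f (x t) u⟫)
      (gradient (fun v => c (x t) v) u0
        + ContinuousLinearMap.adjoint (fderiv ℝ (fun v => f (x t) v) u0) (lam i (t + 1))) u0 :=
    myHasGradientAt_add hhead
      (myHasGradientAt_inner_comp (dfa (x t) u0).hasFDerivAt (lam i (t + 1)))
  rw [hH.gradient]
  exact hGH0

end
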